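/- arXiv:2210.04931 — 3 statements merged into one kernel-verified Lean document; each statement's English description precedes it below -/
import Mathlib

section
/- V(G) = (e^{2ρ} − 2ρe^ρ − 1)/λ² + e^ρ σ² + (1 + γ_s²)(e^ρ/λ²) ∑_{n=3}^∞ (ρⁿ/n!) (b_{n−2} − 2/(1 + γ_s²)), where b_n = 2(n+2) ∫₀^∞ h(v)^{n+1} dv / (α^{n+2}(1 + γ_s²)) for n = 0, 1, 2, …. (This is formula (1.5), Sathe's series representation of the busy period variance.) -/
/-!
Since `0 ≤ h ≤ α` on `(0, ∞)` and, by Tonelli, `∫₀^∞ h = ∫₀^∞ v (1 - G v) dv = μ₂ / 2`, the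
exponential series `e^{λh} - 1 = ∑ₖ₌₁ (λh)ᵏ/k!` is dominated by a multiple of `h` and may be
integrated termwise: `∫₀^∞ (e^{λh} - 1) = ∑ₖ₌₁ λᵏ/k! ∫₀^∞ hᵏ`. As `1 + γ_s² = μ₂/α²`, Sathe's
series equals `(2λ ∑ₖ₌₂ λᵏ/k! ∫₀^∞ hᵏ - 2 ∑ₖ₌₃ ρᵏ/k!) / (1 + γ_s²)`, and both tails are explicit
in terms of `∫₀^∞ (e^{λh} - 1)`, `μ₂` and `e^ρ`.
-/

open MeasureTheory Real Set Filter
open scoped Nat ENNReal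

theorem Real.hasSum_pow_succ_div_factorial_succ (x : ℝ) :
    HasSum (fun n : ℕ => x ^ (n + 1) / (n + 1)!) (exp x - 1) := by
  have h := (hasSum_nat_add_iff' 1).2 (NormedSpace.expSeries_div_hasSum_exp x)
  simpa [← Real.exp_eq_exp_ℝ] using h

theorem hasSum_integral_exp_mul_sub_one {X : Type*} [MeasurableSpace X] {μ : Measure X}
    {f : X → ℝ} {M : ℝ} (hf : Integrable f μ) (hfM : ∀ᵐ x ∂μ, |f x| ≤ M) (c : ℝ) :
    HasSum (fun n : ℕ => c ^ (n + 1) / (n + 1)! * ∫ x, f x ^ (n + 1) ∂μ)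
      (∫ x, (exp (c * f x) - 1) ∂μ) := by
  have hpow : ∀ n : ℕ, ∀ᵐ x ∂μ, |f x| ^ (n + 1) ≤ |M| ^ n * |f x| := fun n => by
    filter_upwards [hfM] with x hx
    rw [pow_succ]
    exact mul_le_mul_of_nonneg_right
      (pow_le_pow_left₀ (abs_nonneg _) (hx.trans (le_abs_self M)) n) (abs_nonneg _)
  have hint : ∀ n : ℕ, Integrable (fun x => f x ^ (n + 1)) μ := fun n => by
    refine (hf.norm.const_mul (|M| ^ n)).mono' (hf.aestronglyMeasurable.pow _) ?_
    filter_upwards [hpow n] with x hx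
    simpa [abs_pow] using hx
  set F : ℕ → X → ℝ := fun n x => c ^ (n + 1) / (n + 1)! * f x ^ (n + 1)
  have hnorm : ∀ n, ∫ x, ‖F n x‖ ∂μ ≤ |c| * (|c| * |M|) ^ n / n ! * ∫ x, |f x| ∂μ := fun n => by
    have hle : |c| ^ (n + 1) / (n + 1)! * |M| ^ n ≤ |c| * (|c| * |M|) ^ n / n ! := by
      rw [mul_pow, pow_succ', div_mul_eq_mul_div, mul_assoc]
      exact div_le_div_of_nonneg_left (by positivity) (by positivity)
        (by exact_mod_cast Nat.factorial_le n.le_succ)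
    rw [← integral_const_mul]
    refine integral_mono_ae ((hint n).const_mul _).norm (hf.norm.const_mul _) ?_
    filter_upwards [hpow n] with x hx
    simp only [F, norm_mul, norm_div, norm_pow, Real.norm_eq_abs, Nat.abs_cast]
    calc |c| ^ (n + 1) / (n + 1)! * |f x| ^ (n + 1)
        ≤ |c| ^ (n + 1) / (n + 1)! * (|M| ^ n * |f x|) := by gcongr
      _ = |c| ^ (n + 1) / (n + 1)! * |M| ^ n * |f x| := by ring
      _ ≤ |c| * (|c| * |M|) ^ n / n ! * |f x| := by gcongr
  have hsum : Summable fun n => ∫ x, ‖F n x‖ ∂μ := by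
    refine Summable.of_nonneg_of_le (fun n => integral_nonneg fun x => norm_nonneg _) hnorm ?_
    simp only [mul_div_assoc]
    exact ((Real.summable_pow_div_factorial (|c| * |M|)).mul_left |c|).mul_right _
  have hF : ∀ x, ∑' n, F n x = exp (c * f x) - 1 := fun x => by
    simp only [F, div_mul_eq_mul_div, ← mul_pow]
    exact (Real.hasSum_pow_succ_div_factorial_succ _).tsum_eq
  have key := hasSum_integral_of_summable_integral_norm (fun n => (hint n).const_mul _) hsum
  rw [integral_congr_ae (ae_of_all μ hF)] at key
  simpa only [F, integral_const_mul] using key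

theorem lintegral_Ioi_lintegral_Ioi {f : ℝ → ℝ≥0∞} (hf : Measurable f) :
    ∫⁻ t in Ioi 0, ∫⁻ v in Ioi t, f v = ∫⁻ v in Ioi 0, ENNReal.ofReal v * f v := by
  have hK : Measurable (Function.uncurry fun t v : ℝ => (Ioi t).indicator f v) := by
    change Measurable fun p : ℝ × ℝ => {q : ℝ × ℝ | q.1 < q.2}.indicator (f ∘ Prod.snd) p
    exact (hf.comp measurable_snd).indicator (measurableSet_lt measurable_fst measurable_snd)
  calc ∫⁻ t in Ioi 0, ∫⁻ v in Ioi t, f v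
      = ∫⁻ t in Ioi 0, ∫⁻ v in Ioi 0, (Ioi t).indicator f v := by
        refine setLIntegral_congr_fun measurableSet_Ioi fun t ht => ?_
        rw [lintegral_indicator measurableSet_Ioi, Measure.restrict_restrict measurableSet_Ioi,
          inter_eq_self_of_subset_left (Ioi_subset_Ioi ht.le)]
    _ = ∫⁻ v in Ioi 0, ∫⁻ t in Ioi 0, (Ioi t).indicator f v :=
        lintegral_lintegral_swap hK.aemeasurable
    _ = ∫⁻ v in Ioi 0, ENNReal.ofReal v * f v := by
        refine setLIntegral_congr_fun measurableSet_Ioi fun v hv => ?_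
        have hind : (fun t => (Ioi t).indicator f v) = (Iio v).indicator fun _ => f v := by
          ext t; simp [indicator_apply]
        rw [hind, lintegral_indicator measurableSet_Iio, Measure.restrict_restrict measurableSet_Iio,
          setLIntegral_const, Iio_inter_Ioi, Real.volume_Ioo, sub_zero, mul_comm]

section TailIntegral

variable {F : ℝ → ℝ}

theorem antitoneOn_integral_Ioi (hF0 : 0 ≤ F) (hF : IntegrableOn F (Ioi 0)) :
    AntitoneOn (fun t => ∫ v in Ioi t, F v) (Ici 0) := fun _ hs _ _ hst =>
  setIntegral_mono_set (hF.mono_set (Ioi_subset_Ioi hs)) (ae_of_all _ fun v => hF0 v)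
    (Ioi_subset_Ioi hst).eventuallyLE

theorem lintegral_ofReal_integral_Ioi (hFm : Measurable F) (hF0 : 0 ≤ F)
    (hF : IntegrableOn F (Ioi 0)) :
    ∫⁻ t in Ioi 0, ENNReal.ofReal (∫ v in Ioi t, F v)
      = ∫⁻ v in Ioi 0, ENNReal.ofReal (v * F v) := by
  calc ∫⁻ t in Ioi 0, ENNReal.ofReal (∫ v in Ioi t, F v)
      = ∫⁻ t in Ioi 0, ∫⁻ v in Ioi t, ENNReal.ofReal (F v) :=
        setLIntegral_congr_fun measurableSet_Ioi fun t ht =>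
          ofReal_integral_eq_lintegral_ofReal (hF.mono_set (Ioi_subset_Ioi ht.le))
            (ae_of_all _ fun v => hF0 v)
    _ = ∫⁻ v in Ioi 0, ENNReal.ofReal (v * F v) := by
        rw [lintegral_Ioi_lintegral_Ioi hFm.ennreal_ofReal]
        exact setLIntegral_congr_fun measurableSet_Ioi fun v hv =>
          (ENNReal.ofReal_mul hv.le).symm

theorem aestronglyMeasurable_integral_Ioi (hF0 : 0 ≤ F) (hF : IntegrableOn F (Ioi 0)) :
    AEStronglyMeasurable (fun t => ∫ v in Ioi t, F v) (volume.restrict (Ioi 0)) :=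
  (aemeasurable_restrict_of_antitoneOn measurableSet_Ioi
    ((antitoneOn_integral_Ioi hF0 hF).mono Ioi_subset_Ici_self)).aestronglyMeasurable

theorem integrableOn_integral_Ioi (hFm : Measurable F) (hF0 : 0 ≤ F)
    (hF : IntegrableOn F (Ioi 0)) (hvF : IntegrableOn (fun v => v * F v) (Ioi 0)) :
    IntegrableOn (fun t => ∫ v in Ioi t, F v) (Ioi 0) := by
  refine ⟨aestronglyMeasurable_integral_Ioi hF0 hF, ?_⟩
  rw [hasFiniteIntegral_iff_ofReal
    (ae_of_all _ fun t => integral_nonneg fun v => hF0 v), lintegral_ofReal_integral_Ioi hFm hF0 hF]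
  exact hvF.lintegral_lt_top

theorem integral_Ioi_integral_Ioi (hFm : Measurable F) (hF0 : 0 ≤ F)
    (hF : IntegrableOn F (Ioi 0)) :
    ∫ t in Ioi 0, ∫ v in Ioi t, F v = ∫ v in Ioi 0, v * F v := by
  rw [integral_eq_lintegral_of_nonneg_ae (ae_of_all _ fun t => integral_nonneg fun v => hF0 v)
      (aestronglyMeasurable_integral_Ioi hF0 hF),
    integral_eq_lintegral_of_nonneg_ae (f := fun v => v * F v) ?_
      (measurable_id.mul hFm).aestronglyMeasurable,
    lintegral_ofReal_integral_Ioi hFm hF0 hF]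
  filter_upwards [ae_restrict_mem measurableSet_Ioi] with v hv
  exact mul_nonneg hv.le (hF0 v)

theorem integral_Ioi_mul_pos (hF0 : 0 ≤ F) (hF : IntegrableOn F (Ioi 0))
    (hvF : IntegrableOn (fun v => v * F v) (Ioi 0)) (hpos : 0 < ∫ v in Ioi 0, F v) :
    0 < ∫ v in Ioi 0, v * F v := by
  have hnn : 0 ≤ᵐ[volume.restrict (Ioi 0)] fun v => v * F v := by
    filter_upwards [ae_restrict_mem measurableSet_Ioi] with v hv
    exact mul_nonneg hv.le (hF0 v)
  rw [setIntegral_pos_iff_support_of_nonneg_ae (ae_of_all _ hF0) hF] at hpos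
  rwa [setIntegral_pos_iff_support_of_nonneg_ae hnn hvF, Function.support_mul, inter_right_comm,
    show (Function.support fun v : ℝ => v) ∩ Ioi 0 = Ioi 0 from
      inter_eq_right.2 fun v hv => ne_of_gt hv, inter_comm]

end TailIntegral

theorem sathe_series_of_hasSum {lam α μ₂ ρ σ2 γ2 S : ℝ} {I b : ℕ → ℝ}
    (hlam : lam ≠ 0) (hα : α ≠ 0) (hμ₂ : μ₂ ≠ 0) (hρ : ρ = lam * α) (hσ : σ2 = μ₂ - α ^ 2)
    (hγ : γ2 = σ2 / α ^ 2) (hS : HasSum (fun n : ℕ => lam ^ (n + 1) / (n + 1)! * I (n + 1)) S)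
    (hI1 : I 1 = μ₂ / 2) (hb : ∀ n : ℕ, b n = 2 * (n + 2) * I (n + 1) / (α ^ (n + 2) * (1 + γ2))) :
    2 * exp ρ / lam * S - ((exp ρ - 1) / lam) ^ 2
      = (exp (2 * ρ) - 2 * ρ * exp ρ - 1) / lam ^ 2 + exp ρ * σ2
        + (1 + γ2) * (exp ρ / lam ^ 2)
          * ∑' n : ℕ, (ρ ^ (n + 3) / (n + 3)!) * (b (n + 1) - 2 / (1 + γ2)) := by
  have hγ1 : 1 + γ2 = μ₂ / α ^ 2 := by rw [hγ, hσ]; field_simp; ring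
  have hγ1ne : 1 + γ2 ≠ 0 := by rw [hγ1]; positivity
  have hS' : HasSum (fun n : ℕ => lam ^ (n + 2) / (n + 2)! * I (n + 2)) (S - lam * μ₂ / 2) := by
    have := (hasSum_nat_add_iff' 1).2 hS
    simp only [Finset.range_one, Finset.sum_singleton, hI1] at this
    rwa [show S - lam * μ₂ / 2 = S - lam ^ (0 + 1) / (0 + 1)! * (μ₂ / 2) by norm_num; ring]
  have hE : HasSum (fun n : ℕ => ρ ^ (n + 3) / (n + 3)!) (exp ρ - 1 - ρ - ρ ^ 2 / 2) := by
    have := (hasSum_nat_add_iff' 3).2 (NormedSpace.expSeries_div_hasSum_exp ρ)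
    simp only [← Real.exp_eq_exp_ℝ, Finset.sum_range_succ, Finset.sum_range_zero] at this
    rwa [show exp ρ - 1 - ρ - ρ ^ 2 / 2 = exp ρ - (0 + ρ ^ 0 / 0! + ρ ^ 1 / 1! + ρ ^ 2 / 2!) by
      norm_num [Nat.factorial]; ring]
  have hterm : ∀ n : ℕ, ρ ^ (n + 3) / (n + 3)! * (b (n + 1) - 2 / (1 + γ2))
      = (2 * lam * (lam ^ (n + 2) / (n + 2)! * I (n + 2)) - 2 * (ρ ^ (n + 3) / (n + 3)!))
        / (1 + γ2) := fun n => by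
    rw [hb, hρ, Nat.factorial_succ (n + 2)]
    push_cast
    field_simp
    ring
  rw [tsum_congr hterm, (((hS'.mul_left _).sub (hE.mul_left 2)).div_const _).tsum_eq, hσ,
    show exp (2 * ρ) = exp ρ * exp ρ by rw [two_mul, exp_add]]
  subst hρ
  rw [hγ1]
  field_simp
  ring

theorem mg_infty_busy_period_variance_series_general
    (G : ℝ → ℝ)
    (hmono : Monotone G)
    (hlim : Tendsto G atTop (nhds 1))
    (lam α μ₂ ρ σ2 γ2 : ℝ)
    (hlam : 0 < lam)
    (hInt1 : IntegrableOn (fun v => 1 - G v) (Ioi 0))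
    (hα : α = ∫ v in Ioi (0:ℝ), (1 - G v))
    (hαpos : 0 < α)
    (hInt2 : IntegrableOn (fun v => v * (1 - G v)) (Ioi 0))
    (hμ₂ : μ₂ = 2 * ∫ v in Ioi (0:ℝ), v * (1 - G v))
    (hρ : ρ = lam * α)
    (hσ : σ2 = μ₂ - α ^ 2)
    (hγ : γ2 = σ2 / α ^ 2)
    (h : ℝ → ℝ)
    (hh : ∀ t : ℝ, h t = ∫ v in Ioi t, (1 - G v))
    (b : ℕ → ℝ)
    (hb : ∀ n : ℕ, b n =
      2 * (n + 2) * (∫ v in Ioi (0:ℝ), (h v) ^ (n + 1)) / (α ^ (n + 2) * (1 + γ2))) :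
    (2 * exp ρ / lam) * (∫ t in Ioi (0:ℝ), (exp (lam * h t) - 1)) - ((exp ρ - 1) / lam) ^ 2
      = (exp (2 * ρ) - 2 * ρ * exp ρ - 1) / lam ^ 2 + exp ρ * σ2
        + (1 + γ2) * (exp ρ / lam ^ 2)
          * ∑' n : ℕ, (ρ ^ (n + 3) / (Nat.factorial (n + 3)))
              * (b (n + 1) - 2 / (1 + γ2)) := by
  have hF0 : 0 ≤ fun v => 1 - G v := fun v => sub_nonneg.2 (hmono.ge_of_tendsto hlim v)
  have hFm : Measurable fun v => 1 - G v := measurable_const.sub hmono.measurable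
  obtain rfl : h = fun t => ∫ v in Ioi t, (1 - G v) := funext hh
  have hh_le : ∀ᵐ t ∂volume.restrict (Ioi 0), |∫ v in Ioi t, (1 - G v)| ≤ α := by
    filter_upwards [ae_restrict_mem measurableSet_Ioi] with t ht
    rw [abs_of_nonneg (integral_nonneg fun v => hF0 v), hα]
    exact antitoneOn_integral_Ioi hF0 hInt1 self_mem_Ici (Ioi_subset_Ici_self ht) ht.le
  have hI1 : ∫ t in Ioi 0, (∫ v in Ioi t, (1 - G v)) ^ 1 = μ₂ / 2 := by
    simp only [pow_one]
    rw [integral_Ioi_integral_Ioi hFm hF0 hInt1, hμ₂]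
    ring
  have hμ₂pos : 0 < μ₂ := by
    rw [hμ₂]
    exact mul_pos two_pos (integral_Ioi_mul_pos hF0 hInt1 hInt2 (hα ▸ hαpos))
  exact sathe_series_of_hasSum (I := fun m => ∫ t in Ioi 0, (∫ v in Ioi t, (1 - G v)) ^ m)
    hlam.ne' hαpos.ne' hμ₂pos.ne' hρ hσ hγ
    (hasSum_integral_exp_mul_sub_one (integrableOn_integral_Ioi hFm hF0 hInt1 hInt2) hh_le lam)
    hI1 hb

/-- Formula (1.5), Sathe's series representation of the M/G/∞ busy period variance:
`V(G) = (e^{2ρ} - 2ρe^ρ - 1)/λ² + e^ρ σ² + (1 + γ_s²)(e^ρ/λ²) ∑_{n=3}^∞ (ρⁿ/n!)(b_{n-2} - 2/(1+γ_s²))`,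
where `b_n = 2(n+2) ∫₀^∞ h(v)^{n+1} dv / (α^{n+2}(1+γ_s²))`. -/
theorem mg_infty_busy_period_variance_series
    (G : ℝ → ℝ)
    (hmono : Monotone G)
    (hrc : ∀ v : ℝ, ContinuousWithinAt G (Set.Ici v) v)
    (hneg : ∀ v : ℝ, v < 0 → G v = 0)
    (hlim : Tendsto G atTop (nhds 1))
    (lam α μ₂ ρ σ2 γ2 : ℝ)
    (hlam : 0 < lam)
    (hInt1 : IntegrableOn (fun v => 1 - G v) (Ioi 0))
    (hα : α = ∫ v in Ioi (0:ℝ), (1 - G v))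
    (hαpos : 0 < α)
    (hInt2 : IntegrableOn (fun v => v * (1 - G v)) (Ioi 0))
    (hμ₂ : μ₂ = 2 * ∫ v in Ioi (0:ℝ), v * (1 - G v))
    (hρ : ρ = lam * α)
    (hσ : σ2 = μ₂ - α ^ 2)
    (hγ : γ2 = σ2 / α ^ 2)
    (h : ℝ → ℝ)
    (hh : ∀ t : ℝ, h t = ∫ v in Ioi t, (1 - G v))
    (b : ℕ → ℝ)
    (hb : ∀ n : ℕ, b n =
      2 * (n + 2) * (∫ v in Ioi (0:ℝ), (h v) ^ (n + 1)) / (α ^ (n + 2) * (1 + γ2))) :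
    (2 * exp ρ / lam) * (∫ t in Ioi (0:ℝ), (exp (lam * h t) - 1)) - ((exp ρ - 1) / lam) ^ 2
      = (exp (2 * ρ) - 2 * ρ * exp ρ - 1) / lam ^ 2 + exp ρ * σ2
        + (1 + γ2) * (exp ρ / lam ^ 2)
          * ∑' n : ℕ, (ρ ^ (n + 3) / (Nat.factorial (n + 3)))
              * (b (n + 1) - 2 / (1 + γ2)) :=
  mg_infty_busy_period_variance_series_general G hmono hlim lam α μ₂ ρ σ2 γ2 hlam hInt1 hα hαpos
    hInt2 hμ₂ hρ hσ hγ h hh b hb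
end

section
/- For every n = 0, 1, 2, …, (n+2) ∫₀^∞ h(v)^{n+1} dv ≤ α^n μ₂; equivalently, b_n ≤ 2 where b_n = 2(n+2) ∫₀^∞ h(v)^{n+1} dv / (α^{n+2}(1 + γ_s²)). (The upper estimate on Sathe's coefficients b_n, which yields the upper bound of formula (1.3).) -/
/-!
Write `f = 1 - G`, so that `h(t) = ∫_t^∞ f`, and `I_k = ∫₀^∞ h^k`. Since `f` is right-continuous,
`h` has right derivative `-f`, and integration by parts gives `I_{k+1} = (k+1) ∫₀^∞ v h(v)^k f(v) dv`;
the boundary term vanishes because `T h(T) ≤ ∫_T^∞ v f(v) dv`. As `f` is nonincreasing,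
`v f(v) ≤ ∫₀^v f = α - h(v)`, hence `I_{n+2} ≤ (n+2) (α I_{n+1} - I_{n+2})`, that is
`(n+3) I_{n+2} ≤ (n+2) α I_{n+1}`. Starting from `2 I_1 = 2 ∫₀^∞ v f(v) dv = μ₂`, induction gives
`(n+2) I_{n+1} ≤ αⁿ μ₂`, and `b_n ≤ 2` is the same inequality divided by `α^{n+2} (1 + γ_s²) = αⁿ μ₂`.
-/

open MeasureTheory Real Set Filter Topology

theorem Antitone.integrableOn_Ioi {f : ℝ → ℝ} (hf : Antitone f) {a : ℝ}
    (hfi : IntegrableOn f (Ioi a)) (t : ℝ) : IntegrableOn f (Ioi t) := by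
  refine (hf.intervalIntegrable (a := t) (b := a)).def'.union hfi |>.mono_set fun x hx => ?_
  rcases le_or_gt x a with hxa | hxa
  · exact Or.inl (Ioc_subset_uIoc ⟨hx, hxa⟩)
  · exact Or.inr hxa

theorem integrableOn_Ioi_and_integral_eq_of_tendsto_intervalIntegral {g : ℝ → ℝ} {a L : ℝ}
    (hgi : ∀ T, IntegrableOn g (Ioc a T)) (hg0 : ∀ x, 0 ≤ g x)
    (hlim : Tendsto (fun T => ∫ x in a..T, g x) atTop (𝓝 L)) :
    IntegrableOn g (Ioi a) ∧ ∫ x in Ioi a, g x = L := by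
  have hint : IntegrableOn g (Ioi a) :=
    integrableOn_Ioi_of_intervalIntegral_norm_tendsto L a hgi tendsto_id <| by
      simpa only [Real.norm_of_nonneg (hg0 _)] using hlim
  exact ⟨hint, tendsto_nhds_unique (intervalIntegral_tendsto_integral_Ioi a hint tendsto_id) hlim⟩

noncomputable def tailIntegral (f : ℝ → ℝ) (t : ℝ) : ℝ := ∫ v in Ioi t, f v

section tailIntegral

variable {f : ℝ → ℝ}

theorem tailIntegral_nonneg (hf0 : ∀ v, 0 ≤ f v) (t : ℝ) : 0 ≤ tailIntegral f t :=
  setIntegral_nonneg measurableSet_Ioi fun v _ => hf0 v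

theorem antitone_tailIntegral (hf : Antitone f) (hf0 : ∀ v, 0 ≤ f v)
    (hfi : IntegrableOn f (Ioi 0)) : Antitone (tailIntegral f) := fun s _ hst =>
  setIntegral_mono_set (hf.integrableOn_Ioi hfi s) (ae_of_all _ fun v => hf0 v)
    (Ioi_subset_Ioi hst).eventuallyLE

theorem tailIntegral_eq_sub_intervalIntegral (hf : Antitone f) (hfi : IntegrableOn f (Ioi 0))
    (t : ℝ) : tailIntegral f t = tailIntegral f 0 - ∫ v in 0..t, f v := by
  rw [tailIntegral, tailIntegral, ← intervalIntegral.integral_Ioi_sub_Ioi' hfi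
    (hf.integrableOn_Ioi hfi t), sub_sub_cancel]

theorem continuous_tailIntegral (hf : Antitone f) (hfi : IntegrableOn f (Ioi 0)) :
    Continuous (tailIntegral f) := by
  rw [funext (tailIntegral_eq_sub_intervalIntegral hf hfi)]
  exact continuous_const.sub (intervalIntegral.continuous_primitive
    (fun _ _ => hf.intervalIntegrable) 0)

theorem hasDerivWithinAt_tailIntegral (hf : Antitone f) (hfi : IntegrableOn f (Ioi 0)) {x : ℝ}
    (hrc : ContinuousWithinAt f (Ici x) x) :
    HasDerivWithinAt (tailIntegral f) (-f x) (Ioi x) x := by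
  rw [funext (tailIntegral_eq_sub_intervalIntegral hf hfi), ← zero_sub]
  refine (hasDerivWithinAt_const _ _ _).sub ?_ |>.mono Ioi_subset_Ici_self
  exact intervalIntegral.integral_hasDerivWithinAt_right hf.intervalIntegrable
    hf.measurable.stronglyMeasurable.stronglyMeasurableAtFilter (hrc.mono Ioi_subset_Ici_self)

theorem mul_le_tailIntegral_zero_sub (hf : Antitone f) (hfi : IntegrableOn f (Ioi 0)) {v : ℝ}
    (hv : 0 ≤ v) : v * f v ≤ tailIntegral f 0 - tailIntegral f v := by
  rw [tailIntegral_eq_sub_intervalIntegral hf hfi v, sub_sub_cancel]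
  calc v * f v = ∫ _ in 0..v, f v := by simp
    _ ≤ ∫ u in 0..v, f u := intervalIntegral.integral_mono_on hv intervalIntegrable_const
        hf.intervalIntegrable fun u hu => hf hu.2

theorem mul_tailIntegral_le (hf : Antitone f) (hf0 : ∀ v, 0 ≤ f v) (hfi : IntegrableOn f (Ioi 0))
    (hvf : IntegrableOn (fun v => v * f v) (Ioi 0)) {t : ℝ} (ht : 0 ≤ t) :
    t * tailIntegral f t ≤ ∫ v in Ioi t, v * f v := by
  rw [tailIntegral, ← integral_const_mul]
  exact setIntegral_mono_on ((hf.integrableOn_Ioi hfi t).const_mul t)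
    (hvf.mono_set (Ioi_subset_Ioi ht)) measurableSet_Ioi
    fun v hv => mul_le_mul_of_nonneg_right (le_of_lt hv) (hf0 v)

theorem integrableOn_mul_tailIntegral_pow_mul (hf : Antitone f) (hf0 : ∀ v, 0 ≤ f v)
    (hfi : IntegrableOn f (Ioi 0)) (hvf : IntegrableOn (fun v => v * f v) (Ioi 0)) (n : ℕ) :
    IntegrableOn (fun v => v * tailIntegral f v ^ n * f v) (Ioi 0) := by
  refine (hvf.const_mul (tailIntegral f 0 ^ n)).mono' ?_ ?_
  · exact ((measurable_id.mul ((continuous_tailIntegral hf hfi).measurable.pow_const n)).mul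
      hf.measurable).aestronglyMeasurable
  · filter_upwards [ae_restrict_mem measurableSet_Ioi] with v (hv : 0 < v)
    have hpow : tailIntegral f v ^ n ≤ tailIntegral f 0 ^ n :=
      pow_le_pow_left₀ (tailIntegral_nonneg hf0 v)
        (antitone_tailIntegral hf hf0 hfi hv.le) n
    rw [Real.norm_of_nonneg (by have := tailIntegral_nonneg hf0 v; have := hf0 v; positivity)]
    calc v * tailIntegral f v ^ n * f v = tailIntegral f v ^ n * (v * f v) := by ring
      _ ≤ tailIntegral f 0 ^ n * (v * f v) :=
        mul_le_mul_of_nonneg_right hpow (mul_nonneg hv.le (hf0 v))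

theorem tendsto_mul_tailIntegral_pow (hf : Antitone f) (hf0 : ∀ v, 0 ≤ f v)
    (hfi : IntegrableOn f (Ioi 0)) (hvf : IntegrableOn (fun v => v * f v) (Ioi 0)) (n : ℕ) :
    Tendsto (fun T => T * tailIntegral f T ^ (n + 1)) atTop (𝓝 0) := by
  have htail : Tendsto (fun T => tailIntegral f 0 ^ n * ∫ v in Ioi T, v * f v) atTop (𝓝 0) := by
    simpa using (tendsto_integral_Ioi_zero tendsto_id).const_mul (tailIntegral f 0 ^ n)
  refine tendsto_of_tendsto_of_tendsto_of_le_of_le' tendsto_const_nhds htail ?_ ?_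
  all_goals filter_upwards [eventually_ge_atTop 0] with T hT
  · have := tailIntegral_nonneg hf0 T
    positivity
  · calc T * tailIntegral f T ^ (n + 1) = tailIntegral f T ^ n * (T * tailIntegral f T) := by ring
      _ ≤ tailIntegral f 0 ^ n * ∫ v in Ioi T, v * f v :=
        mul_le_mul (pow_le_pow_left₀ (tailIntegral_nonneg hf0 T)
          (antitone_tailIntegral hf hf0 hfi hT) n) (mul_tailIntegral_le hf hf0 hfi hvf hT)
          (mul_nonneg hT (tailIntegral_nonneg hf0 T)) (pow_nonneg (tailIntegral_nonneg hf0 0) n)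

theorem intervalIntegral_tailIntegral_pow (hf : Antitone f) (hfi : IntegrableOn f (Ioi 0))
    (hrc : ∀ x, ContinuousWithinAt f (Ici x) x) (n : ℕ) {T : ℝ} (hT : 0 ≤ T) :
    ∫ v in 0..T, tailIntegral f v ^ (n + 1) =
      T * tailIntegral f T ^ (n + 1) + (n + 1) * ∫ v in 0..T, v * tailIntegral f v ^ n * f v := by
  have hcont := continuous_tailIntegral hf hfi
  have hpow : IntervalIntegrable (fun v => tailIntegral f v ^ (n + 1)) volume 0 T :=
    (hcont.pow _).intervalIntegrable 0 T
  have hprod : IntervalIntegrable (fun v => v * tailIntegral f v ^ n * f v) volume 0 T :=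
    hf.intervalIntegrable.continuousOn_mul (continuous_id.mul (hcont.pow n)).continuousOn
  have hderiv : ∀ x, HasDerivWithinAt (fun v => v * tailIntegral f v ^ (n + 1))
      (tailIntegral f x ^ (n + 1) - (n + 1) * (x * tailIntegral f x ^ n * f x)) (Ioi x) x := by
    intro x
    refine ((hasDerivWithinAt_id x _).mul
      ((hasDerivWithinAt_tailIntegral hf hfi (hrc x)).pow (n + 1))).congr_deriv ?_
    simp only [id, Pi.pow_apply, Nat.add_sub_cancel]
    push_cast
    ring
  have hF : Continuous fun v => v * tailIntegral f v ^ (n + 1) := continuous_id.mul (hcont.pow _)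
  have hFTC := intervalIntegral.integral_eq_sub_of_hasDeriv_right_of_le hT hF.continuousOn
    (fun x _ => hderiv x) (hpow.sub (hprod.const_mul _))
  rw [intervalIntegral.integral_sub hpow (hprod.const_mul _),
    intervalIntegral.integral_const_mul] at hFTC
  linarith

theorem integral_tailIntegral_pow (hf : Antitone f) (hf0 : ∀ v, 0 ≤ f v)
    (hfi : IntegrableOn f (Ioi 0)) (hrc : ∀ x, ContinuousWithinAt f (Ici x) x)
    (hvf : IntegrableOn (fun v => v * f v) (Ioi 0)) (n : ℕ) :
    IntegrableOn (fun v => tailIntegral f v ^ (n + 1)) (Ioi 0) ∧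
      ∫ v in Ioi 0, tailIntegral f v ^ (n + 1) =
        (n + 1) * ∫ v in Ioi 0, v * tailIntegral f v ^ n * f v := by
  refine integrableOn_Ioi_and_integral_eq_of_tendsto_intervalIntegral
    (fun _ => ((continuous_tailIntegral hf hfi).pow _).integrableOn_Ioc)
    (fun v => pow_nonneg (tailIntegral_nonneg hf0 v) _) ?_
  have hlim := (tendsto_mul_tailIntegral_pow hf hf0 hfi hvf n).add
    ((intervalIntegral_tendsto_integral_Ioi 0
      (integrableOn_mul_tailIntegral_pow_mul hf hf0 hfi hvf n) tendsto_id).const_mul (n + 1 : ℝ))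
  rw [zero_add] at hlim
  refine hlim.congr' ?_
  filter_upwards [eventually_ge_atTop 0] with T hT
  exact (intervalIntegral_tailIntegral_pow hf hfi hrc n hT).symm

theorem add_three_mul_integral_tailIntegral_pow_le (hf : Antitone f) (hf0 : ∀ v, 0 ≤ f v)
    (hfi : IntegrableOn f (Ioi 0)) (hrc : ∀ x, ContinuousWithinAt f (Ici x) x)
    (hvf : IntegrableOn (fun v => v * f v) (Ioi 0)) (n : ℕ) :
    (n + 3) * ∫ v in Ioi 0, tailIntegral f v ^ (n + 2) ≤
      (n + 2) * tailIntegral f 0 * ∫ v in Ioi 0, tailIntegral f v ^ (n + 1) := by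
  obtain ⟨hint₁, -⟩ := integral_tailIntegral_pow hf hf0 hfi hrc hvf n
  obtain ⟨hint₂, heq⟩ := integral_tailIntegral_pow hf hf0 hfi hrc hvf (n + 1)
  have hJ : ∫ v in Ioi 0, v * tailIntegral f v ^ (n + 1) * f v ≤
      ∫ v in Ioi 0, (tailIntegral f 0 * tailIntegral f v ^ (n + 1) - tailIntegral f v ^ (n + 2)) :=
    setIntegral_mono_on (integrableOn_mul_tailIntegral_pow_mul hf hf0 hfi hvf (n + 1))
      ((hint₁.const_mul _).sub hint₂) measurableSet_Ioi fun v (hv : 0 < v) => by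
        have := mul_le_mul_of_nonneg_left (mul_le_tailIntegral_zero_sub hf hfi hv.le)
          (pow_nonneg (tailIntegral_nonneg hf0 v) (n + 1))
        linear_combination this
  rw [integral_sub (hint₁.const_mul _) hint₂, integral_const_mul] at hJ
  push_cast at heq
  have := mul_le_mul_of_nonneg_left hJ (by positivity : (0 : ℝ) ≤ n + 2)
  linarith

theorem add_two_mul_integral_tailIntegral_pow_le (hf : Antitone f) (hf0 : ∀ v, 0 ≤ f v)
    (hfi : IntegrableOn f (Ioi 0)) (hrc : ∀ x, ContinuousWithinAt f (Ici x) x)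
    (hvf : IntegrableOn (fun v => v * f v) (Ioi 0)) (n : ℕ) :
    (n + 2) * ∫ v in Ioi 0, tailIntegral f v ^ (n + 1) ≤
      tailIntegral f 0 ^ n * (2 * ∫ v in Ioi 0, v * f v) := by
  induction n with
  | zero =>
    have h0 := (integral_tailIntegral_pow hf hf0 hfi hrc hvf 0).2
    simp only [zero_add, pow_one, pow_zero, mul_one, Nat.cast_zero, one_mul] at h0
    norm_num [h0]
  | succ n ih =>
    calc ((n + 1 : ℕ) + 2 : ℝ) * ∫ v in Ioi 0, tailIntegral f v ^ (n + 1 + 1)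
        ≤ tailIntegral f 0 * ((n + 2) * ∫ v in Ioi 0, tailIntegral f v ^ (n + 1)) := by
          have := add_three_mul_integral_tailIntegral_pow_le hf hf0 hfi hrc hvf n
          push_cast
          linarith
      _ ≤ tailIntegral f 0 * (tailIntegral f 0 ^ n * (2 * ∫ v in Ioi 0, v * f v)) :=
          mul_le_mul_of_nonneg_left ih (tailIntegral_nonneg hf0 0)
      _ = tailIntegral f 0 ^ (n + 1) * (2 * ∫ v in Ioi 0, v * f v) := by ring

end tailIntegral

theorem sathe_coefficients_upper_estimate_general
    (G : ℝ → ℝ)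
    (hmono : Monotone G)
    (hrc : ∀ v : ℝ, ContinuousWithinAt G (Set.Ici v) v)
    (hlim : Tendsto G atTop (nhds 1))
    (α μ₂ γ2 : ℝ)
    (hInt1 : IntegrableOn (fun v => 1 - G v) (Ioi 0))
    (hα : α = ∫ v in Ioi (0:ℝ), (1 - G v))
    (hαpos : 0 < α)
    (hInt2 : IntegrableOn (fun v => v * (1 - G v)) (Ioi 0))
    (hμ₂ : μ₂ = 2 * ∫ v in Ioi (0:ℝ), v * (1 - G v))
    (hγ : γ2 = μ₂ / α ^ 2 - 1)
    (h : ℝ → ℝ)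
    (hh : ∀ t : ℝ, h t = ∫ v in Ioi t, (1 - G v))
    (b : ℕ → ℝ)
    (hb : ∀ n : ℕ, b n =
      2 * (n + 2) * (∫ v in Ioi (0:ℝ), (h v) ^ (n + 1)) / (α ^ (n + 2) * (1 + γ2))) :
    ∀ n : ℕ,
      ((n : ℝ) + 2) * (∫ v in Ioi (0:ℝ), (h v) ^ (n + 1)) ≤ α ^ n * μ₂ ∧ b n ≤ 2 := by
  intro n
  obtain rfl : h = tailIntegral fun v => 1 - G v := funext hh
  have hf0 : ∀ v, 0 ≤ 1 - G v := fun v => sub_nonneg.2 (hmono.ge_of_tendsto hlim v)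
  have hbound := add_two_mul_integral_tailIntegral_pow_le
    (fun s t hst => sub_le_sub_left (hmono hst) 1) hf0 hInt1
    (fun x => continuousWithinAt_const.sub (hrc x)) hInt2 n
  rw [← hμ₂, tailIntegral, ← hα] at hbound
  have hI : 0 ≤ ∫ v in Ioi 0, tailIntegral (fun v => 1 - G v) v ^ (n + 1) :=
    setIntegral_nonneg measurableSet_Ioi fun v _ => pow_nonneg (tailIntegral_nonneg hf0 v) _
  have hden : α ^ (n + 2) * (1 + γ2) = α ^ n * μ₂ := by
    rw [hγ]
    field_simp
    ring
  refine ⟨hbound, ?_⟩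
  rw [hb n, hden]
  exact div_le_of_le_mul₀ ((mul_nonneg (by positivity) hI).trans hbound) zero_le_two (by linarith)

/-- Upper estimate on Sathe's coefficients: for every `n`,
`(n+2) ∫₀^∞ h(v)^{n+1} dv ≤ αⁿ μ₂`, equivalently `b_n ≤ 2`. -/
theorem sathe_coefficients_upper_estimate
    (G : ℝ → ℝ)
    (hmono : Monotone G)
    (hrc : ∀ v : ℝ, ContinuousWithinAt G (Set.Ici v) v)
    (hneg : ∀ v : ℝ, v < 0 → G v = 0)
    (hlim : Tendsto G atTop (nhds 1))
    (α μ₂ γ2 : ℝ)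
    (hInt1 : IntegrableOn (fun v => 1 - G v) (Ioi 0))
    (hα : α = ∫ v in Ioi (0:ℝ), (1 - G v))
    (hαpos : 0 < α)
    (hInt2 : IntegrableOn (fun v => v * (1 - G v)) (Ioi 0))
    (hμ₂ : μ₂ = 2 * ∫ v in Ioi (0:ℝ), v * (1 - G v))
    (hγ : γ2 = μ₂ / α ^ 2 - 1)
    (h : ℝ → ℝ)
    (hh : ∀ t : ℝ, h t = ∫ v in Ioi t, (1 - G v))
    (b : ℕ → ℝ)
    (hb : ∀ n : ℕ, b n =
      2 * (n + 2) * (∫ v in Ioi (0:ℝ), (h v) ^ (n + 1)) / (α ^ (n + 2) * (1 + γ2))) :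
    ∀ n : ℕ,
      ((n : ℝ) + 2) * (∫ v in Ioi (0:ℝ), (h v) ^ (n + 1)) ≤ α ^ n * μ₂ ∧ b n ≤ 2 :=
  sathe_coefficients_upper_estimate_general G hmono hrc hlim α μ₂ γ2 hInt1 hα hαpos hInt2 hμ₂ hγ h
    hh b hb
end

section
/- If G is NBUE with mean α, i.e. ∫₀^∞ (1 − G(v)) dv = α and ∫_t^∞ (1 − G(v)) dv ≤ α(1 − G(t)) for all t ≥ 0, then V(G) ≤ V(G^M), where G^M(v) = 1 − e^{−v/α} is the exponential distribution function with mean α. (This is formula (1.8): with NBUE service times the M/G/∞ busy period variance is at most the M/M/∞ one.) -/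
/-!
NBUE means that the integrated tail `h t = ∫_t^∞ (1 - G)` satisfies `h ≤ α (1 - G) = -α h'`
(right derivative, by right-continuity of `G`). Grönwall's inequality then gives
`h t ≤ h 0 · e^{-t/α} = α e^{-t/α}`, which is exactly the integrated tail of the exponential
distribution with mean `α`. Since the variance is increasing in `∫ (e^{λ h} - 1)`, the bound follows.
-/

open MeasureTheory Real Set Filter

theorem Real.exp_sub_one_le_mul_exp (x : ℝ) : exp x - 1 ≤ x * exp x := by
  have h := mul_le_mul_of_nonneg_right (add_one_le_exp (-x)) (exp_pos x).le
  rw [← exp_add, neg_add_cancel, exp_zero] at h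
  linarith

theorem MeasureTheory.Integrable.exp_sub_one {Ω : Type*} [MeasurableSpace Ω] {μ : Measure Ω}
    {f : Ω → ℝ} {M : ℝ} (hf : Integrable f μ) (hbound : ∀ᵐ x ∂μ, 0 ≤ f x ∧ f x ≤ M) :
    Integrable (fun x => exp (f x) - 1) μ := by
  refine (hf.const_mul (exp M)).mono'
    ((continuous_exp.comp_aestronglyMeasurable hf.aestronglyMeasurable).sub
      aestronglyMeasurable_const) ?_
  filter_upwards [hbound] with x ⟨hf0, hfM⟩
  have hexp : exp (f x) - 1 ≤ exp M * f x :=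
    calc exp (f x) - 1 ≤ f x * exp (f x) := exp_sub_one_le_mul_exp _
      _ ≤ exp M * f x := by rw [mul_comm]; gcongr
  rw [Real.norm_eq_abs, abs_of_nonneg (by linarith [add_one_le_exp (f x)])]
  exact hexp

theorem hasDerivWithinAt_integral_Ioi {g : ℝ → ℝ} {x : ℝ} (hg : IntegrableOn g (Ioi x))
    (hcont : ContinuousWithinAt g (Ioi x) x) :
    HasDerivWithinAt (fun t => ∫ v in Ioi t, g v) (-g x) (Ici x) x := by
  have hsplit : ∀ t ∈ Ici x, ∫ v in Ioi t, g v = (∫ v in Ioi x, g v) - ∫ v in x..t, g v :=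
    fun t ht => by rw [← intervalIntegral.integral_Ioi_sub_Ioi hg ht]; ring
  have hprim : HasDerivWithinAt (fun t => ∫ v in x..t, g v) (g x) (Ici x) x :=
    intervalIntegral.integral_hasDerivWithinAt_right (by simp)
      ⟨Ioi x, self_mem_nhdsWithin, hg.aestronglyMeasurable⟩ hcont
  simpa using ((hasDerivWithinAt_const x (Ici x) _).sub hprim).congr hsplit
    (hsplit x self_mem_Ici)

theorem integral_Ioi_le_integral_Ioi_mul_exp {g : ℝ → ℝ} {a c : ℝ} (hc : 0 < c)
    (hg : IntegrableOn g (Ioi a)) (hcont : ∀ x, a ≤ x → ContinuousWithinAt g (Ioi x) x)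
    (hle : ∀ x, a ≤ x → ∫ v in Ioi x, g v ≤ c * g x) {t : ℝ} (ht : a ≤ t) :
    ∫ v in Ioi t, g v ≤ (∫ v in Ioi a, g v) * exp (-(t - a) / c) := by
  have hderiv : ∀ x ∈ Ico a t,
      HasDerivWithinAt (fun s => ∫ v in Ioi s, g v) (-g x) (Ici x) x := fun x hx =>
    hasDerivWithinAt_integral_Ioi (hg.mono_set (Ioi_subset_Ioi hx.1)) (hcont x hx.1)
  have := le_gronwallBound_of_liminf_deriv_right_le (K := -1 / c) (ε := 0)
    (hg.continuousOn_Ici_primitive_Ioi.mono Icc_subset_Ici_self)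
    (fun x hx r hr => (hderiv x hx).liminf_right_slope_le hr) le_rfl
    (fun x hx => by
      have := hle x hx.1
      rw [add_zero, div_mul_eq_mul_div, le_div_iff₀ hc]
      linarith)
    t ⟨ht, le_rfl⟩
  rwa [gronwallBound_ε0, div_mul_eq_mul_div, neg_one_mul] at this

theorem exp_neg_div_eq_exp_mul (α v : ℝ) : exp (-v / α) = exp (-α⁻¹ * v) := by
  rw [neg_div, div_eq_inv_mul, neg_mul]

theorem integrableOn_exp_neg_div_Ioi {α : ℝ} (hα : 0 < α) (t : ℝ) :
    IntegrableOn (fun v => exp (-v / α)) (Ioi t) := by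
  simpa only [exp_neg_div_eq_exp_mul] using
    integrableOn_exp_mul_Ioi (neg_lt_zero.2 (inv_pos.2 hα)) t

theorem integral_Ioi_exp_neg_div {α : ℝ} (hα : 0 < α) (t : ℝ) :
    ∫ v in Ioi t, exp (-v / α) = α * exp (-t / α) := by
  simp only [exp_neg_div_eq_exp_mul]
  rw [integral_exp_mul_Ioi (neg_lt_zero.2 (inv_pos.2 hα))]
  field_simp

theorem integrableOn_exp_mul_exp_neg_div_sub_one {α c : ℝ} (hα : 0 < α) (hc : 0 ≤ c) :
    IntegrableOn (fun t => exp (c * exp (-t / α)) - 1) (Ioi 0) := by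
  refine Integrable.exp_sub_one (M := c) ((integrableOn_exp_neg_div_Ioi hα 0).const_mul c) ?_
  filter_upwards [ae_restrict_mem measurableSet_Ioi] with t (ht : 0 < t)
  have hexp_le_one : exp (-t / α) ≤ 1 :=
    exp_le_one_iff.2 (div_nonpos_of_nonpos_of_nonneg (neg_nonpos.2 ht.le) hα.le)
  exact ⟨by positivity, mul_le_of_le_one_right hc hexp_le_one⟩

theorem setIntegral_exp_mul_sub_one_mono {h₁ h₂ : ℝ → ℝ} {s : Set ℝ} {c : ℝ}
    (hs : MeasurableSet s) (hc : 0 ≤ c) (h₁_nonneg : ∀ t ∈ s, 0 ≤ h₁ t)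
    (hle : ∀ t ∈ s, h₁ t ≤ h₂ t) (hint : IntegrableOn (fun t => exp (c * h₂ t) - 1) s) :
    ∫ t in s, (exp (c * h₁ t) - 1) ≤ ∫ t in s, (exp (c * h₂ t) - 1) := by
  refine integral_mono_of_nonneg ?_ hint ?_
  · filter_upwards [ae_restrict_mem hs] with t ht
    simpa using mul_nonneg hc (h₁_nonneg t ht)
  · filter_upwards [ae_restrict_mem hs] with t ht
    gcongr
    exact hle t ht

theorem nbue_busy_period_variance_le_exponential_general
    (G : ℝ → ℝ)
    (hmono : Monotone G)
    (hrc : ∀ v : ℝ, ContinuousWithinAt G (Set.Ici v) v)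
    (hlim : Tendsto G atTop (nhds 1))
    (lam α ρ : ℝ)
    (hlam : 0 < lam)
    (hInt : IntegrableOn (fun v => 1 - G v) (Ioi 0))
    (hα : α = ∫ v in Ioi (0:ℝ), (1 - G v))
    (hαpos : 0 < α)
    (hNBUE : ∀ t : ℝ, 0 ≤ t → (∫ v in Ioi t, (1 - G v)) ≤ α * (1 - G t))
    (GM : ℝ → ℝ)
    (hGM : ∀ v : ℝ, 0 ≤ v → GM v = 1 - exp (-v / α)) :
    (2 * exp ρ / lam) * (∫ t in Ioi (0:ℝ), (exp (lam * ∫ v in Ioi t, (1 - G v)) - 1))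
        - ((exp ρ - 1) / lam) ^ 2
      ≤ (2 * exp ρ / lam) * (∫ t in Ioi (0:ℝ), (exp (lam * ∫ v in Ioi t, (1 - GM v)) - 1))
        - ((exp ρ - 1) / lam) ^ 2 := by
  have hG_le_one : ∀ v, G v ≤ 1 := fun v => hmono.ge_of_tendsto hlim v
  have htail_nonneg : ∀ t, 0 ≤ ∫ v in Ioi t, (1 - G v) := fun t =>
    setIntegral_nonneg measurableSet_Ioi fun v _ => sub_nonneg.2 (hG_le_one v)
  have htail_le : ∀ t, 0 ≤ t → ∫ v in Ioi t, (1 - G v) ≤ α * exp (-t / α) := fun t ht => by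
    simpa [← hα] using integral_Ioi_le_integral_Ioi_mul_exp hαpos hInt
      (fun x _ => (continuousWithinAt_const.sub (hrc x)).mono Ioi_subset_Ici_self) hNBUE ht
  have htail_exp : ∀ t, 0 ≤ t → ∫ v in Ioi t, (1 - GM v) = α * exp (-t / α) := fun t ht => by
    rw [← integral_Ioi_exp_neg_div hαpos t]
    exact setIntegral_congr_fun measurableSet_Ioi fun v hv => by
      rw [hGM v (ht.trans (le_of_lt hv))]; ring
  refine sub_le_sub_right (mul_le_mul_of_nonneg_left ?_ (by positivity)) _
  have hint := integrableOn_exp_mul_exp_neg_div_sub_one hαpos (mul_nonneg hlam.le hαpos.le)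
  refine setIntegral_exp_mul_sub_one_mono measurableSet_Ioi hlam.le
    (fun t _ => htail_nonneg t) (fun t ht => (htail_le t ht.le).trans_eq (htail_exp t ht.le).symm)
    (hint.congr_fun (fun t ht => ?_) measurableSet_Ioi)
  simp only [htail_exp t (le_of_lt ht), mul_assoc]

/-- Formula (1.8): with NBUE service times the M/G/∞ busy period variance is at most
the M/M/∞ one, `V(G) ≤ V(G^M)` where `G^M` is exponential with the same mean `α`. -/
theorem nbue_busy_period_variance_le_exponential
    (G : ℝ → ℝ)
    (hmono : Monotone G)
    (hrc : ∀ v : ℝ, ContinuousWithinAt G (Set.Ici v) v)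
    (hneg : ∀ v : ℝ, v < 0 → G v = 0)
    (hlim : Tendsto G atTop (nhds 1))
    (lam α ρ : ℝ)
    (hlam : 0 < lam)
    (hInt : IntegrableOn (fun v => 1 - G v) (Ioi 0))
    (hα : α = ∫ v in Ioi (0:ℝ), (1 - G v))
    (hαpos : 0 < α)
    (hρ : ρ = lam * α)
    (hNBUE : ∀ t : ℝ, 0 ≤ t → (∫ v in Ioi t, (1 - G v)) ≤ α * (1 - G t))
    (GM : ℝ → ℝ)
    (hGM : ∀ v : ℝ, 0 ≤ v → GM v = 1 - exp (-v / α))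
    (hGMneg : ∀ v : ℝ, v < 0 → GM v = 0) :
    (2 * exp ρ / lam) * (∫ t in Ioi (0:ℝ), (exp (lam * ∫ v in Ioi t, (1 - G v)) - 1))
        - ((exp ρ - 1) / lam) ^ 2
      ≤ (2 * exp ρ / lam) * (∫ t in Ioi (0:ℝ), (exp (lam * ∫ v in Ioi t, (1 - GM v)) - 1))
        - ((exp ρ - 1) / lam) ^ 2 :=
  nbue_busy_period_variance_le_exponential_general G hmono hrc hlim lam α ρ hlam hInt hα hαpos hNBUE
    GM hGM
end
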